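/- Let G ⊆ Diff(ℂ,0) be a finitely generated L-stable subgroup. Then G is either finite cyclic, or G is an abelian analytically linearizable group containing an element conjugate to an irrational rotation z ↦ e^{2πiλ}z with λ ∈ ℝ \ ℚ (circle type). -/

import Mathlib

open Filter Topology

noncomputable section

/-- The pseudo-orbit of `p` under a set `S` of maps: all points obtained from `p`
by successively applying elements of `S`. -/
inductive PseudoOrbit (S : Set (ℂ → ℂ)) (p : ℂ) : ℂ → Prop
  | base : PseudoOrbit S p p
  | step {q : ℂ} {f : ℂ → ℂ} : PseudoOrbit S p q → f ∈ S → PseudoOrbit S p (f q)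

/-- A set of germs is `L`-stable if every neighborhood `U` of `0` contains a
sub-neighborhood `V` all of whose pseudo-orbits stay in `U`. -/
def LStableSet (S : Set (ℂ → ℂ)) : Prop :=
  ∀ U ∈ 𝓝 (0:ℂ), ∃ V ∈ 𝓝 (0:ℂ), V ⊆ U ∧ ∀ p ∈ V, ∀ q : ℂ, PseudoOrbit S p q → q ∈ U

/-- A set is closed off the origin if it is closed in some punctured neighborhood of `0`. -/
def ClosedOffOrigin (S : Set ℂ) : Prop :=
  ∃ W ∈ 𝓝 (0:ℂ), closure S ∩ (W \ {0}) ⊆ S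

/-- A germ is analytically linearizable if some local biholomorphism fixing `0`
conjugates it to its linear part `z ↦ f'(0)·z`. -/
def Linearizable (f : ℂ → ℂ) : Prop :=
  ∃ h : ℂ → ℂ, AnalyticAt ℂ h 0 ∧ h 0 = 0 ∧ deriv h 0 ≠ 0 ∧
    ∀ᶠ z in 𝓝 (0:ℂ), h (f z) = deriv f 0 * h z

/-- A germ is non-resonant if its multiplier is `e^{2πiλ}` with `λ` irrational. -/
def NonResonant (f : ℂ → ℂ) : Prop :=
  ∃ l : ℝ, Irrational l ∧ deriv f 0 = Complex.exp (2 * (Real.pi : ℂ) * Complex.I * (l : ℂ))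

/-- A set of germs is finite up to germ equality. -/
def GermFinite (S : Set (ℂ → ℂ)) : Prop :=
  ∃ F : Set (ℂ → ℂ), F.Finite ∧ ∀ f ∈ S, ∃ g ∈ F, f =ᶠ[𝓝 (0:ℂ)] g

/-- A set of germs is cyclic (up to germ equality) if it consists of the iterates of
a single element. -/
def GermCyclic (S : Set (ℂ → ℂ)) : Prop :=
  ∃ g ∈ S, ∀ f ∈ S, ∃ n : ℕ, f =ᶠ[𝓝 (0:ℂ)] g^[n]

/-- A (model of a) subgroup of `Diff(ℂ,0)`: a set of holomorphic germs fixing `0`,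
invertible at `0`, closed under composition and germ-inversion. -/
structure GermGroup where
  carrier : Set (ℂ → ℂ)
  analytic : ∀ f ∈ carrier, AnalyticAt ℂ f 0
  fixes_zero : ∀ f ∈ carrier, f 0 = 0
  deriv_ne : ∀ f ∈ carrier, deriv f 0 ≠ 0
  id_mem : id ∈ carrier
  comp_mem : ∀ f ∈ carrier, ∀ g ∈ carrier, f ∘ g ∈ carrier
  inv_mem : ∀ f ∈ carrier, ∃ g ∈ carrier,
    (∀ᶠ z in 𝓝 (0:ℂ), g (f z) = z) ∧ (∀ᶠ z in 𝓝 (0:ℂ), f (g z) = z)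

/-- A germ group is finitely generated if finitely many of its elements generate every
element (as a germ) by composition. -/
def GermGroup.FinitelyGenerated (G : GermGroup) : Prop :=
  ∃ T : Set (ℂ → ℂ), T.Finite ∧ T ⊆ G.carrier ∧
    ∀ f ∈ G.carrier, ∃ l : List (ℂ → ℂ), (∀ g ∈ l, g ∈ T) ∧
      f =ᶠ[𝓝 (0:ℂ)] l.foldr (· ∘ ·) id

/-!
`L`-stability keeps every orbit of every element of `G` in a fixed ball. Hence no multiplier
`f'(0)` has modulus `≠ 1` (an expanding germ, or its inverse, would push orbits out), and each
element is linearizable: a linearization is obtained as a limit, along an ultrafilter, of the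
uniformly bounded averages `N⁻¹ ∑_{n<N} a⁻ⁿ fⁿ`, whose defect from `h ∘ f = a h` is `O(1/N)`.
A germ of `G` with multiplier `1` is therefore the identity, so an element of `G` is determined
by its multiplier and `G` is abelian.

If all multipliers are roots of unity, finite generation bounds their orders, and the multiplier
group is a finite, hence cyclic, subgroup of `ℂˣ`. Otherwise some `f₀` has a multiplier on the
unit circle that is not a root of unity, and a linearization of `f₀` linearizes every element
of `G` as well.
-/

open Metric Set Function

theorem PseudoOrbit.iterate {S : Set (ℂ → ℂ)} {f : ℂ → ℂ} (hf : f ∈ S) (p : ℂ) :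
    ∀ n, PseudoOrbit S p (f^[n] p)
  | 0 => .base
  | n + 1 => by
    rw [iterate_succ_apply']
    exact (PseudoOrbit.iterate hf p n).step hf

namespace LStableSet

variable {S : Set (ℂ → ℂ)} {f : ℂ → ℂ}

theorem exists_ball (hS : LStableSet S) {ε : ℝ} (hε : 0 < ε) :
    ∃ δ > 0, ∀ p ∈ ball (0 : ℂ) δ, ∀ q, PseudoOrbit S p q → q ∈ ball (0 : ℂ) ε := by
  obtain ⟨V, hV, -, horb⟩ := hS (ball 0 ε) (ball_mem_nhds 0 hε)
  obtain ⟨δ, hδ, hδV⟩ := Metric.mem_nhds_iff.1 hV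
  exact ⟨δ, hδ, fun p hp q hq => horb p (hδV hp) q hq⟩

theorem mapsTo_iterate (hS : LStableSet S) (hf : f ∈ S) {ε : ℝ} (hε : 0 < ε) :
    ∃ δ > 0, ∀ n, MapsTo f^[n] (ball (0 : ℂ) δ) (ball (0 : ℂ) ε) := by
  obtain ⟨δ, hδ, horb⟩ := hS.exists_ball hε
  exact ⟨δ, hδ, fun n p hp => horb p hp _ (PseudoOrbit.iterate hf p n)⟩

theorem norm_deriv_le_one (hS : LStableSet S) (hf : f ∈ S) (hd : DifferentiableAt ℂ f 0)
    (hf0 : f 0 = 0) : ‖deriv f 0‖ ≤ 1 := by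
  set a := deriv f 0
  by_contra! ha
  obtain ⟨c, hc, hca⟩ := exists_between ha
  have hexpand : ∀ᶠ z in 𝓝 (0 : ℂ), c * ‖z‖ ≤ ‖f z‖ := by
    have hlo := (hasDerivAt_iff_isLittleO.1 hd.hasDerivAt).bound
      (sub_pos.2 hca)
    filter_upwards [hlo] with z hz
    simp only [hf0, sub_zero, smul_eq_mul] at hz
    have : ‖z * a‖ ≤ ‖f z‖ + ‖f z - z * a‖ := norm_le_insert _ _
    rw [norm_mul] at this
    linarith
  obtain ⟨ρ, hρ, hρexpand⟩ := Metric.eventually_nhds_iff_ball.1 hexpand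
  obtain ⟨δ, hδ, horb⟩ := hS.mapsTo_iterate hf hρ
  set p : ℂ := ((δ / 2 : ℝ) : ℂ)
  have hp : ‖p‖ = δ / 2 := by simp [p, abs_of_pos hδ]
  have hpδ : p ∈ ball (0 : ℂ) δ := by rw [mem_ball_zero_iff, hp]; linarith
  have hgrow : ∀ n : ℕ, c ^ n * ‖p‖ ≤ ‖f^[n] p‖ := by
    intro n
    induction n with
    | zero => simp
    | succ n ih =>
      rw [iterate_succ_apply', pow_succ]
      calc c ^ n * c * ‖p‖ ≤ c * ‖f^[n] p‖ := by nlinarith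
        _ ≤ ‖f (f^[n] p)‖ := hρexpand _ (horb n hpδ)
  obtain ⟨n, hn⟩ := pow_unbounded_of_one_lt (ρ / ‖p‖) hc
  have hbound := mem_ball_zero_iff.1 (horb n hpδ)
  rw [div_lt_iff₀ (by rw [hp]; linarith)] at hn
  linarith [hgrow n]

end LStableSet

section LinearizingAverage

open Finset

def linearizingAverage (a : ℂ) (f : ℂ → ℂ) (N : ℕ) (z : ℂ) : ℂ :=
  (N : ℂ)⁻¹ * ∑ n ∈ range N, a⁻¹ ^ n * f^[n] z

variable {a : ℂ} {f : ℂ → ℂ} {N : ℕ}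

theorem linearizingAverage_apply_zero (hf0 : f 0 = 0) : linearizingAverage a f N 0 = 0 := by
  simp [linearizingAverage, iterate_fixed hf0]

theorem deriv_linearizingAverage (hd : DifferentiableAt ℂ f 0) (hf0 : f 0 = 0)
    (ha0 : deriv f 0 ≠ 0) (hN : N ≠ 0) : deriv (linearizingAverage (deriv f 0) f N) 0 = 1 := by
  have hiter : ∀ n, HasDerivAt (fun z => (deriv f 0)⁻¹ ^ n * f^[n] z) 1 0 := fun n => by
    have := (HasDerivAt.iterate 0 hd.hasDerivAt hf0 n).const_mul ((deriv f 0)⁻¹ ^ n)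
    rwa [← mul_pow, inv_mul_cancel₀ ha0, one_pow] at this
  have hsum := (HasDerivAt.fun_sum fun n (_ : n ∈ range N) => hiter n).const_mul (N : ℂ)⁻¹
  simp only [sum_const, card_range, nsmul_eq_mul, mul_one] at hsum
  rw [inv_mul_cancel₀ (Nat.cast_ne_zero.2 hN)] at hsum
  exact hsum.deriv

theorem differentiableOn_linearizingAverage {s : Set ℂ} (h : ∀ n, DifferentiableOn ℂ f^[n] s) :
    DifferentiableOn ℂ (linearizingAverage a f N) s :=
  (DifferentiableOn.fun_sum fun n _ => (h n).const_mul _).const_mul _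

theorem norm_linearizingAverage_le (ha : ‖a‖ = 1) {z : ℂ} {ρ : ℝ} (hbd : ∀ n, ‖f^[n] z‖ ≤ ρ) :
    ‖linearizingAverage a f N z‖ ≤ ρ := by
  rcases N.eq_zero_or_pos with rfl | hN
  · simpa [linearizingAverage] using (norm_nonneg z).trans (hbd 0)
  have hsum : ‖∑ n ∈ range N, a⁻¹ ^ n * f^[n] z‖ ≤ N * ρ := by
    refine (norm_sum_le _ _).trans ?_
    simpa [ha] using sum_le_sum fun n (_ : n ∈ range N) => hbd n
  rw [linearizingAverage, norm_mul, norm_inv, Complex.norm_natCast,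
    inv_mul_le_iff₀ (by exact_mod_cast hN)]
  exact hsum

theorem inv_mul_linearizingAverage_comp_sub (z : ℂ) :
    a⁻¹ * linearizingAverage a f N (f z) - linearizingAverage a f N z =
      (N : ℂ)⁻¹ * (a⁻¹ ^ N * f^[N] z - z) := by
  have hshift : ∀ n, a⁻¹ * (a⁻¹ ^ n * f^[n] (f z)) = a⁻¹ ^ (n + 1) * f^[n + 1] z := fun n => by
    rw [iterate_succ_apply, pow_succ]; ring
  have hleft : a⁻¹ * linearizingAverage a f N (f z) =
      (N : ℂ)⁻¹ * ∑ n ∈ range N, a⁻¹ ^ (n + 1) * f^[n + 1] z := by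
    rw [linearizingAverage, mul_left_comm, mul_sum]
    simp_rw [hshift]
  rw [hleft, linearizingAverage, ← mul_sub, ← sum_sub_distrib,
    sum_range_sub (fun n => a⁻¹ ^ n * f^[n] z)]
  simp

theorem tendsto_inv_mul_linearizingAverage_comp_sub (ha : ‖a‖ = 1) {z : ℂ} {ρ : ℝ}
    (hbd : ∀ n, ‖f^[n] z‖ ≤ ρ) :
    Tendsto (fun N => a⁻¹ * linearizingAverage a f N (f z) - linearizingAverage a f N z)
      atTop (𝓝 0) := by
  simp_rw [inv_mul_linearizingAverage_comp_sub]
  refine squeeze_zero_norm (a := fun N : ℕ => (ρ + ‖z‖) / N) (fun N => ?_)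
    (tendsto_const_div_atTop_nhds_zero_nat _)
  rw [norm_mul, norm_inv, Complex.norm_natCast, div_eq_inv_mul]
  gcongr
  refine (norm_sub_le _ _).trans ?_
  simpa [norm_mul, norm_pow, ha] using hbd N

end LinearizingAverage

section PowerSeries

open FormalMultilinearSeries
open scoped NNReal ENNReal

theorem Ultrafilter.exists_tendsto_of_norm_le {ι : Type*} (U : Ultrafilter ι) {u : ι → ℂ} {C : ℝ}
    (h : ∀ i, ‖u i‖ ≤ C) : ∃ c, ‖c‖ ≤ C ∧ Tendsto u U (𝓝 c) := by
  obtain ⟨c, hc, hlim⟩ := (isCompact_closedBall (0 : ℂ) C).ultrafilter_le_nhds (U.map u) <| by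
    rw [Ultrafilter.coe_map]
    exact tendsto_principal.2 (Eventually.of_forall fun i => mem_closedBall_zero_iff.2 (h i))
  exact ⟨c, mem_closedBall_zero_iff.1 hc, hlim⟩

/-- A form of Montel's theorem. The limit is the power series whose coefficients are the limits of
the Taylor coefficients; Cauchy's estimates bound these uniformly and dominate the tails. -/
theorem exists_analyticAt_tendsto_of_norm_le {ι : Type*} (U : Ultrafilter ι) {F : ι → ℂ → ℂ}
    {R ρ : ℝ} (hR : 0 < R) (hF : ∀ i, DifferentiableOn ℂ (F i) (ball 0 R))
    (hb : ∀ i, ∀ z ∈ ball (0 : ℂ) R, ‖F i z‖ ≤ ρ) :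
    ∃ h : ℂ → ℂ, AnalyticAt ℂ h 0 ∧
      (∀ z ∈ ball (0 : ℂ) (R / 4), Tendsto (fun i => F i z) U (𝓝 (h z))) ∧
      Tendsto (fun i => deriv (F i) 0) U (𝓝 (deriv h 0)) := by
  let r : ℝ≥0 := ⟨R / 2, by positivity⟩
  have hr : (r : ℝ) = R / 2 := rfl
  have hr0 : 0 < r := by rw [← NNReal.coe_pos, hr]; positivity
  set coeff : ι → ℕ → ℂ := fun i m => (m.factorial : ℂ)⁻¹ * iteratedDeriv m (F i) 0
  have hcoeff : ∀ i m, ‖coeff i m‖ ≤ ρ / r ^ m := by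
    intro i m
    have hrR : (r : ℝ) < R := by rw [hr]; linarith
    have hcauchy := Complex.norm_iteratedDeriv_le_of_forall_mem_sphere_norm_le m
      (NNReal.coe_pos.2 hr0) ((hF i).diffContOnCl_ball (closedBall_subset_ball hrR))
      fun z hz => hb i z (sphere_subset_ball hrR hz)
    rw [norm_mul, norm_inv, Complex.norm_natCast, inv_mul_le_iff₀ (by positivity)]
    simpa [mul_div_assoc] using hcauchy
  choose c hc_le hc_lim using fun m => U.exists_tendsto_of_norm_le fun i => hcoeff i m
  set p := ofScalars ℂ c
  have hp : (r : ℝ≥0∞) ≤ p.radius := p.le_radius_of_bound ρ fun m => by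
    rw [ofScalars_norm, ← le_div_iff₀ (by positivity)]
    exact hc_le m
  have hps : HasFPowerSeriesOnBall (ofScalarsSum (E := ℂ) c) p 0 r :=
    (p.hasFPowerSeriesOnBall ((ENNReal.coe_pos.2 hr0).trans_le hp)).mono (ENNReal.coe_pos.2 hr0) hp
  refine ⟨ofScalarsSum c, hps.analyticAt, fun z hz => ?_, ?_⟩
  · have hzr : ‖z‖ ≤ r / 2 := by rw [hr]; linarith [mem_ball_zero_iff.1 hz]
    have hF_eq : ∀ i, F i z = ∑' m, coeff i m * z ^ m := fun i => by
      simpa using (Complex.taylorSeries_eq_on_ball' (ball_subset_ball (by linarith) hz) (hF i)).symm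
    simp_rw [hF_eq, ofScalarsSum_eq_tsum, smul_eq_mul]
    refine tendsto_tsum_of_dominated_convergence (bound := fun m => ρ * (1 / 2) ^ m)
      ((summable_geometric_two).mul_left ρ) (fun m => (hc_lim m).mul_const _)
      (Eventually.of_forall fun i m => ?_)
    calc ‖coeff i m * z ^ m‖ ≤ ρ / r ^ m * (r / 2) ^ m := by
          rw [norm_mul, norm_pow]
          gcongr
          · exact (norm_nonneg _).trans (hcoeff i m)
          · exact hcoeff i m
      _ = ρ * (1 / 2) ^ m := by
          field_simp
          rw [div_pow, one_div_pow]
          ring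
  · rw [hps.hasFPowerSeriesAt.deriv]
    simpa [p, coeff] using hc_lim 1

end PowerSeries

theorem exists_linearization_of_mapsTo_iterate {f : ℂ → ℂ} {δ ρ : ℝ} (hδ : 0 < δ)
    (hf : DifferentiableOn ℂ f (ball 0 ρ)) (hf0 : f 0 = 0) (ha : ‖deriv f 0‖ = 1)
    (horb : ∀ n, MapsTo f^[n] (ball (0 : ℂ) δ) (ball 0 ρ)) :
    ∃ h : ℂ → ℂ, AnalyticAt ℂ h 0 ∧ h 0 = 0 ∧ deriv h 0 = 1 ∧
      ∀ᶠ z in 𝓝 (0 : ℂ), h (f z) = deriv f 0 * h z := by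
  set a := deriv f 0
  have ha0 : a ≠ 0 := norm_ne_zero_iff.1 (by rw [ha]; exact one_ne_zero)
  have hρ : 0 < ρ := by simpa using horb 0 (mem_ball_self hδ)
  have hd : DifferentiableAt ℂ f 0 := hf.differentiableAt (ball_mem_nhds 0 hρ)
  have hiter : ∀ n, DifferentiableOn ℂ f^[n] (ball 0 δ) := by
    intro n
    induction n with
    | zero => exact differentiableOn_id
    | succ n ih => rw [iterate_succ']; exact hf.comp ih (horb n)
  have hbd : ∀ z ∈ ball (0 : ℂ) δ, ∀ n, ‖f^[n] z‖ ≤ ρ := fun z hz n =>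
    (mem_ball_zero_iff.1 (horb n hz)).le
  set U : Ultrafilter ℕ := Ultrafilter.of atTop
  have hU : (U : Filter ℕ) ≤ atTop := Ultrafilter.of_le _
  obtain ⟨h, h_an, hlim, hlim_deriv⟩ := exists_analyticAt_tendsto_of_norm_le U hδ
    (fun N => differentiableOn_linearizingAverage (a := a) (N := N) hiter)
    (fun N z hz => norm_linearizingAverage_le ha (hbd z hz))
  have h0 : h 0 = 0 := tendsto_nhds_unique (hlim 0 (mem_ball_self (by positivity)))
    (by simp [linearizingAverage_apply_zero hf0])
  have hd1 : deriv h 0 = 1 := by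
    refine tendsto_nhds_unique hlim_deriv (tendsto_const_nhds.congr' ?_)
    filter_upwards [hU (eventually_ne_atTop 0)] with N hN
    exact (deriv_linearizingAverage hd hf0 ha0 hN).symm
  refine ⟨h, h_an, h0, hd1, ?_⟩
  have hsmall : ball (0 : ℂ) (δ / 4) ∈ 𝓝 0 := ball_mem_nhds 0 (by positivity)
  have hf_tendsto : Tendsto f (𝓝 0) (𝓝 0) := by simpa [hf0] using hd.continuousAt.tendsto
  filter_upwards [hsmall, hf_tendsto hsmall] with z hz hfz
  have hdefect := (tendsto_inv_mul_linearizingAverage_comp_sub ha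
    (hbd z (ball_subset_ball (by linarith) hz))).mono_left hU
  have hlim_eq := tendsto_nhds_unique (((hlim (f z) hfz).const_mul a⁻¹).sub (hlim z hz)) hdefect
  field_simp at hlim_eq
  linear_combination hlim_eq

section Rigidity

/-- Compare the leading terms of `u z = z ^ k * g z` on both sides. -/
theorem deriv_pow_eq_of_comp_eq_mul {f u : ℂ → ℂ} {b : ℂ} {k : ℕ} (hf : DifferentiableAt ℂ f 0)
    (hf0 : f 0 = 0) (hu : AnalyticAt ℂ u 0) (hk : analyticOrderAt u 0 = k)
    (heq : ∀ᶠ z in 𝓝 0, u (f z) = b * u z) : deriv f 0 ^ k = b := by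
  obtain ⟨g, hg, hg0, hug⟩ := hu.analyticOrderAt_eq_natCast.1 hk
  have hf_tendsto : Tendsto f (𝓝 0) (𝓝 0) := by simpa [hf0] using hf.continuousAt.tendsto
  have hquot : ∀ᶠ z in 𝓝[≠] 0, (f z / z) ^ k * g (f z) = b * g z := by
    have hfactor : ∀ᶠ z in 𝓝 0, f z ^ k * g (f z) = b * (z ^ k * g z) := by
      filter_upwards [heq, hf_tendsto.eventually hug, hug] with z h1 h2 h3
      simp only [sub_zero, smul_eq_mul] at h2 h3
      rw [← h2, ← h3, h1]
    filter_upwards [nhdsWithin_le_nhds hfactor, self_mem_nhdsWithin] with z hz (hz0 : z ≠ 0)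
    rw [div_pow, div_mul_eq_mul_div, hz, div_eq_iff (pow_ne_zero k hz0)]
    ring
  have hslope : Tendsto (fun z => f z / z) (𝓝[≠] 0) (𝓝 (deriv f 0)) := by
    refine (hasDerivAt_iff_tendsto_slope.1 hf.hasDerivAt).congr' ?_
    filter_upwards with z
    simp [slope_def_field, hf0]
  have hlim_left : Tendsto (fun z => (f z / z) ^ k * g (f z)) (𝓝[≠] 0)
      (𝓝 (deriv f 0 ^ k * g 0)) :=
    (hslope.pow k).mul (hg.continuousAt.tendsto.comp (hf_tendsto.mono_left nhdsWithin_le_nhds))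
  have hlim_right : Tendsto (fun z => b * g z) (𝓝[≠] 0) (𝓝 (b * g 0)) :=
    (hg.continuousAt.tendsto.mono_left nhdsWithin_le_nhds).const_mul b
  exact mul_right_cancel₀ hg0 (tendsto_nhds_unique (hlim_left.congr' hquot) hlim_right)

/-- The defect `h ∘ f - f'(0) • h` is an eigenfunction of `f₀` for the eigenvalue `f₀'(0)` and
vanishes to order at least `2`, so its eigenvalue would also be a higher power of `f₀'(0)`. -/
theorem eventually_comp_eq_deriv_mul_of_commute {f₀ f h : ℂ → ℂ}
    (hnt : ¬ IsOfFinOrder (deriv f₀ 0)) (ha0 : deriv f₀ 0 ≠ 0) (hf₀ : DifferentiableAt ℂ f₀ 0)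
    (hf₀0 : f₀ 0 = 0) (hf : AnalyticAt ℂ f 0) (hf0 : f 0 = 0) (hh : AnalyticAt ℂ h 0) (hh0 : h 0 = 0)
    (hlin : ∀ᶠ z in 𝓝 0, h (f₀ z) = deriv f₀ 0 * h z)
    (hcomm : ∀ᶠ z in 𝓝 0, f (f₀ z) = f₀ (f z)) :
    ∀ᶠ z in 𝓝 0, h (f z) = deriv f 0 * h z := by
  set u := fun z => h (f z) - deriv f 0 * h z
  have hhf : AnalyticAt ℂ (fun z => h (f z)) 0 := by
    refine AnalyticAt.comp (g := h) ?_ hf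
    rwa [hf0]
  have hu : AnalyticAt ℂ u 0 := hhf.sub (analyticAt_const.mul hh)
  have hf_tendsto : Tendsto f (𝓝 0) (𝓝 0) := by simpa [hf0] using hf.continuousAt.tendsto
  have heq : ∀ᶠ z in 𝓝 0, u (f₀ z) = deriv f₀ 0 * u z := by
    filter_upwards [hcomm, hlin, hf_tendsto.eventually hlin] with z h1 h2 h3
    simp only [u, h1, h2, h3]
    ring
  suffices horder : analyticOrderAt u 0 = ⊤ by
    filter_upwards [analyticOrderAt_eq_top.1 horder] with z hz
    exact sub_eq_zero.1 hz
  by_contra hfin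
  obtain ⟨k, hk⟩ := ENat.ne_top_iff_exists.1 hfin
  have hderiv : deriv u 0 = 0 := by
    have hd : HasDerivAt u (deriv h 0 * deriv f 0 - deriv f 0 * deriv h 0) 0 := by
      have hh' : HasDerivAt h (deriv h 0) (f 0) := by rw [hf0]; exact hh.differentiableAt.hasDerivAt
      exact (hh'.comp 0 hf.differentiableAt.hasDerivAt).sub
        (hh.differentiableAt.hasDerivAt.const_mul _)
    rw [hd.deriv]; ring
  have hk2 : 2 ≤ k := by
    have : ((2 : ℕ) : ℕ∞) ≤ analyticOrderAt u 0 :=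
      (natCast_le_analyticOrderAt_iff_iteratedDeriv_eq_zero hu).2 fun i hi => by
        interval_cases i
        · simp [u, hf0, hh0]
        · simpa using hderiv
    exact_mod_cast hk ▸ this
  have hpow := deriv_pow_eq_of_comp_eq_mul hf₀ hf₀0 hu hk.symm heq
  refine hnt (isOfFinOrder_iff_pow_eq_one.2 ⟨k - 1, by omega, ?_⟩)
  refine mul_right_cancel₀ ha0 ?_
  rw [pow_sub_one_mul (by omega), hpow, one_mul]

open Complex Real in
theorem exists_irrational_eq_exp_of_norm_eq_one {a : ℂ} (ha : ‖a‖ = 1) (hnt : ¬ IsOfFinOrder a) :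
    ∃ l : ℝ, Irrational l ∧ a = exp (2 * (π : ℂ) * I * (l : ℂ)) := by
  have hexp : a = exp (arg a * I) := by simpa [ha] using (norm_mul_exp_arg_mul_I a).symm
  refine ⟨arg a / (2 * π), fun ⟨q, hq⟩ => hnt ?_, ?_⟩
  · refine isOfFinOrder_iff_pow_eq_one.2 ⟨q.den, q.pos, ?_⟩
    have hq' : (arg a : ℂ) = 2 * π * q := by
      have : arg a = 2 * π * q := by rw [hq]; field_simp
      exact_mod_cast this
    rw [hexp, ← Complex.exp_nat_mul, hq', ← exp_int_mul_two_pi_mul_I q.num]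
    congr 1
    have : (q.num : ℂ) = q * q.den := by exact_mod_cast (Rat.mul_den_eq_num q).symm
    rw [this]; ring
  · nth_rewrite 1 [hexp]
    congr 1
    push_cast
    field_simp

end Rigidity

namespace GermGroup

variable (G : GermGroup) {f g : ℂ → ℂ}

theorem tendsto_nhds_zero (hf : f ∈ G.carrier) : Tendsto f (𝓝 0) (𝓝 0) := by
  simpa [G.fixes_zero f hf] using (G.analytic f hf).continuousAt.tendsto

theorem deriv_comp (hf : f ∈ G.carrier) (hg : g ∈ G.carrier) :
    deriv (f ∘ g) 0 = deriv f 0 * deriv g 0 := by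
  have hf' : HasDerivAt f (deriv f 0) (g 0) := by
    rw [G.fixes_zero g hg]
    exact (G.analytic f hf).differentiableAt.hasDerivAt
  exact (hf'.comp 0 (G.analytic g hg).differentiableAt.hasDerivAt).deriv

theorem exists_left_inverse (hf : f ∈ G.carrier) :
    ∃ g ∈ G.carrier, (∀ᶠ z in 𝓝 0, g (f z) = z) ∧ deriv g 0 = (deriv f 0)⁻¹ := by
  obtain ⟨g, hg, hgf, -⟩ := G.inv_mem f hf
  have hgf' : g ∘ f =ᶠ[𝓝 0] id := hgf
  have hd : deriv (g ∘ f) 0 = 1 := by rw [hgf'.deriv_eq, deriv_id]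
  rw [G.deriv_comp hg hf] at hd
  exact ⟨g, hg, hgf, eq_inv_of_mul_eq_one_left hd⟩

theorem iterate_mem (hf : f ∈ G.carrier) (n : ℕ) : f^[n] ∈ G.carrier := by
  induction n with
  | zero => exact G.id_mem
  | succ n ih => rw [iterate_succ']; exact G.comp_mem f hf _ ih

theorem deriv_iterate (hf : f ∈ G.carrier) (n : ℕ) : deriv f^[n] 0 = deriv f 0 ^ n :=
  (HasDerivAt.iterate 0 (G.analytic f hf).differentiableAt.hasDerivAt (G.fixes_zero f hf) n).deriv

def multipliers : Subgroup ℂˣ where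
  carrier := {u | ∃ f ∈ G.carrier, deriv f 0 = u}
  mul_mem' := by
    rintro u v ⟨f, hf, hfu⟩ ⟨g, hg, hgv⟩
    exact ⟨f ∘ g, G.comp_mem f hf g hg, by rw [G.deriv_comp hf hg, hfu, hgv, Units.val_mul]⟩
  one_mem' := ⟨id, G.id_mem, deriv_id 0⟩
  inv_mem' := by
    rintro u ⟨f, hf, hfu⟩
    obtain ⟨g, hg, -, hgd⟩ := G.exists_left_inverse hf
    exact ⟨g, hg, by rw [hgd, hfu, Units.val_inv_eq_inv_val]⟩

theorem exists_multiplier (hf : f ∈ G.carrier) : ∃ u : G.multipliers, deriv f 0 = (u : ℂˣ) :=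
  ⟨⟨Units.mk0 _ (G.deriv_ne f hf), f, hf, rfl⟩, rfl⟩

theorem exists_pow_deriv_eq_one (hfg : G.FinitelyGenerated)
    (htors : ∀ f ∈ G.carrier, IsOfFinOrder (deriv f 0)) :
    ∃ Q, 0 < Q ∧ ∀ f ∈ G.carrier, deriv f 0 ^ Q = 1 := by
  obtain ⟨T, hT, hTG, hgen⟩ := hfg
  set Q := ∏ t ∈ hT.toFinset, orderOf (deriv t 0)
  have hQ : 0 < Q := Finset.prod_pos fun t ht => (htors t (hTG (hT.mem_toFinset.1 ht))).orderOf_pos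
  have hT_pow : ∀ t ∈ T, deriv t 0 ^ Q = 1 := fun t ht =>
    orderOf_dvd_iff_pow_eq_one.1 (Finset.dvd_prod_of_mem _ (hT.mem_toFinset.2 ht))
  have hword : ∀ l : List (ℂ → ℂ), (∀ g ∈ l, g ∈ T) →
      l.foldr (· ∘ ·) id ∈ G.carrier ∧ deriv (l.foldr (· ∘ ·) id) 0 ^ Q = 1 := by
    intro l
    induction l with
    | nil => exact fun _ => ⟨G.id_mem, by simp⟩
    | cons g l ih =>
      intro hl
      obtain ⟨hmem, hpow⟩ := ih fun t ht => hl t (List.mem_cons_of_mem _ ht)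
      have hg := hl g List.mem_cons_self
      rw [List.foldr_cons, G.deriv_comp (hTG hg) hmem, mul_pow, hT_pow g hg, hpow, one_mul]
      exact ⟨G.comp_mem g (hTG hg) _ hmem, rfl⟩
  refine ⟨Q, hQ, fun f hf => ?_⟩
  obtain ⟨l, hl, hfl⟩ := hgen f hf
  rw [hfl.deriv_eq]
  exact (hword l hl).2

theorem finite_multipliers (hfg : G.FinitelyGenerated)
    (htors : ∀ f ∈ G.carrier, IsOfFinOrder (deriv f 0)) : Finite G.multipliers := by
  obtain ⟨Q, hQ, hpow⟩ := G.exists_pow_deriv_eq_one hfg htors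
  have : NeZero Q := ⟨hQ.ne'⟩
  have hle : G.multipliers ≤ rootsOfUnity Q ℂ := by
    rintro u ⟨f, hf, hfu⟩
    rw [mem_rootsOfUnity', ← hfu, hpow f hf]
  exact Finite.of_injective (Subgroup.inclusion hle) (Subgroup.inclusion_injective hle)

variable {G}

theorem norm_deriv_eq_one (hst : LStableSet G.carrier) (hf : f ∈ G.carrier) :
    ‖deriv f 0‖ = 1 := by
  have hle : ∀ {g}, g ∈ G.carrier → ‖deriv g 0‖ ≤ 1 := fun {g} hg =>
    hst.norm_deriv_le_one hg (G.analytic g hg).differentiableAt (G.fixes_zero g hg)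
  obtain ⟨g, hg, -, hgd⟩ := G.exists_left_inverse hf
  have hinv := hle hg
  rw [hgd, norm_inv, inv_le_one₀ (norm_pos_iff.2 (G.deriv_ne f hf))] at hinv
  exact le_antisymm (hle hf) hinv

theorem exists_linearization (hst : LStableSet G.carrier) (hf : f ∈ G.carrier) :
    ∃ h : ℂ → ℂ, AnalyticAt ℂ h 0 ∧ h 0 = 0 ∧ deriv h 0 = 1 ∧
      ∀ᶠ z in 𝓝 (0 : ℂ), h (f z) = deriv f 0 * h z := by
  obtain ⟨ρ, hρ, hf_an⟩ := (G.analytic f hf).exists_ball_analyticOnNhd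
  obtain ⟨δ, hδ, horb⟩ := hst.mapsTo_iterate hf hρ
  exact exists_linearization_of_mapsTo_iterate hδ hf_an.differentiableOn (G.fixes_zero f hf)
    (G.norm_deriv_eq_one hst hf) horb

theorem eventuallyEq_id_of_deriv_eq_one (hst : LStableSet G.carrier) (hf : f ∈ G.carrier)
    (hd : deriv f 0 = 1) : f =ᶠ[𝓝 0] id := by
  obtain ⟨h, h_an, -, h_d, h_lin⟩ := G.exists_linearization hst hf
  have hinv := h_an.hasStrictDerivAt.eventually_left_inverse (by rw [h_d]; exact one_ne_zero)
  filter_upwards [h_lin, hinv, (G.tendsto_nhds_zero hf).eventually hinv] with z h1 h2 h3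
  rw [hd, one_mul] at h1
  show f z = z
  rw [← h3, h1, h2]

theorem eventuallyEq_of_deriv_eq (hst : LStableSet G.carrier) (hf : f ∈ G.carrier)
    (hg : g ∈ G.carrier) (hd : deriv f 0 = deriv g 0) : f =ᶠ[𝓝 0] g := by
  obtain ⟨g', hg', hinv, hd'⟩ := G.exists_left_inverse hg
  have hid := G.eventuallyEq_id_of_deriv_eq_one hst (G.comp_mem f hf g' hg') <| by
    rw [G.deriv_comp hf hg', hd', hd, mul_inv_cancel₀ (G.deriv_ne g hg)]
  filter_upwards [hinv, (G.tendsto_nhds_zero hg).eventually hid] with z h1 h2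
  simpa [h1] using h2

theorem comp_eventuallyEq_comp (hst : LStableSet G.carrier) (hf : f ∈ G.carrier)
    (hg : g ∈ G.carrier) : f ∘ g =ᶠ[𝓝 0] g ∘ f :=
  G.eventuallyEq_of_deriv_eq hst (G.comp_mem f hf g hg) (G.comp_mem g hg f hf) <| by
    rw [G.deriv_comp hf hg, G.deriv_comp hg hf, mul_comm]

theorem germFinite_and_germCyclic (hst : LStableSet G.carrier) [Finite G.multipliers] :
    GermFinite G.carrier ∧ GermCyclic G.carrier := by
  choose σ hσG hσd using fun u : G.multipliers => u.2
  obtain ⟨x, hx⟩ := IsCyclic.exists_monoid_generator (α := G.multipliers)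
  constructor
  · refine ⟨range σ, finite_range σ, fun f hf => ?_⟩
    obtain ⟨u, hu⟩ := G.exists_multiplier hf
    exact ⟨σ u, mem_range_self u, G.eventuallyEq_of_deriv_eq hst hf (hσG u) (by rw [hu, hσd])⟩
  · refine ⟨σ x, hσG x, fun f hf => ?_⟩
    obtain ⟨u, hu⟩ := G.exists_multiplier hf
    obtain ⟨n, rfl⟩ := Submonoid.mem_powers_iff _ _ |>.1 (hx u)
    refine ⟨n, G.eventuallyEq_of_deriv_eq hst hf (G.iterate_mem (hσG x) n) ?_⟩
    rw [hu, G.deriv_iterate (hσG x), hσd]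
    simp

end GermGroup

/-- a finitely generated `L`-stable subgroup `G ⊆ Diff(ℂ,0)` is either
finite cyclic, or an abelian analytically linearizable group containing an element
conjugate to an irrational rotation (circle type). -/
theorem LStable_group_dichotomy (G : GermGroup)
    (hfg : G.FinitelyGenerated) (hst : LStableSet G.carrier) :
    (GermFinite G.carrier ∧ GermCyclic G.carrier) ∨
    ((∀ f ∈ G.carrier, ∀ g ∈ G.carrier, f ∘ g =ᶠ[𝓝 (0:ℂ)] g ∘ f) ∧
     (∃ h : ℂ → ℂ, AnalyticAt ℂ h 0 ∧ h 0 = 0 ∧ deriv h 0 ≠ 0 ∧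
        ∀ f ∈ G.carrier, ∀ᶠ z in 𝓝 (0:ℂ), h (f z) = deriv f 0 * h z) ∧
     (∃ f ∈ G.carrier, NonResonant f ∧ Linearizable f)) := by
  by_cases htors : ∀ f ∈ G.carrier, IsOfFinOrder (deriv f 0)
  · have := G.finite_multipliers hfg htors
    exact Or.inl (GermGroup.germFinite_and_germCyclic hst)
  push Not at htors
  obtain ⟨f₀, hf₀, hnt⟩ := htors
  obtain ⟨h, h_an, h0, h_d, h_lin⟩ := G.exists_linearization hst hf₀
  have h_d' : deriv h 0 ≠ 0 := by rw [h_d]; exact one_ne_zero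
  have h_lin_all : ∀ f ∈ G.carrier, ∀ᶠ z in 𝓝 (0 : ℂ), h (f z) = deriv f 0 * h z :=
    fun f hf => eventually_comp_eq_deriv_mul_of_commute hnt (G.deriv_ne f₀ hf₀)
      (G.analytic f₀ hf₀).differentiableAt (G.fixes_zero f₀ hf₀) (G.analytic f hf)
      (G.fixes_zero f hf) h_an h0 h_lin (GermGroup.comp_eventuallyEq_comp hst hf hf₀)
  exact Or.inr ⟨fun f hf g hg => GermGroup.comp_eventuallyEq_comp hst hf hg,
    ⟨h, h_an, h0, h_d', h_lin_all⟩,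
    f₀, hf₀, exists_irrational_eq_exp_of_norm_eq_one (GermGroup.norm_deriv_eq_one hst hf₀) hnt,
    h, h_an, h0, h_d', h_lin⟩
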